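/- arXiv:0712.3112 — 5 statements merged into one kernel-verified Lean document; each statement's English description precedes it below -/
import Mathlib

section
/- Let G = (V, E) be a finite multigraph and let e ∈ E be any edge. Then the edge elimination polynomial satisfies the recurrence ξ(G, x, y, z) = ξ(G_{−e}, x, y, z) + y·ξ(G_{/e}, x, y, z) + z·ξ(G_{†e}, x, y, z), as an identity in the polynomial ring ℤ[x, y, z]. -/
/-- A finite multigraph: finite vertex and edge types, each edge assigned an
unordered pair of (not necessarily distinct) endpoints. -/
structure Multigraph where
  V : Type
  E : Type
  [fintypeV : Fintype V]
  [decEqV : DecidableEq V]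
  [fintypeE : Fintype E]
  [decEqE : DecidableEq E]
  ends : E → Sym2 V

namespace Multigraph

attribute [instance] fintypeV decEqV fintypeE decEqE

/-- The empty multigraph. -/
def emptyGraph : Multigraph where
  V := Empty
  E := Empty
  ends := fun e => e.elim

/-- The one-vertex multigraph `E₁` with no edges. -/
def singleVertex : Multigraph where
  V := Unit
  E := Empty
  ends := fun e => e.elim

/-- Disjoint union of multigraphs. -/
def disjUnion (G₁ G₂ : Multigraph) : Multigraph where
  V := G₁.V ⊕ G₂.V
  E := G₁.E ⊕ G₂.E
  ends := Sum.elim (fun e => (G₁.ends e).map Sum.inl) (fun e => (G₂.ends e).map Sum.inr)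

/-- Deletion of an edge. -/
def deleteEdge (G : Multigraph) (e : G.E) : Multigraph where
  V := G.V
  E := {e' : G.E // e' ≠ e}
  ends := fun e' => G.ends e'.val

/-- Contraction of an edge: its endpoints are identified
(replaced by a single new vertex) and the edge is removed. -/
def contractEdge (G : Multigraph) (e : G.E) : Multigraph where
  V := {v : G.V // v ∉ G.ends e} ⊕ Unit
  E := {e' : G.E // e' ≠ e}
  ends := fun e' => (G.ends e'.val).map
    (fun v => if h : v ∈ G.ends e then Sum.inr () else Sum.inl ⟨v, h⟩)

/-- Extraction of an edge: both endpoints are deleted together with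
all incident edges. -/
def extractEdge (G : Multigraph) (e : G.E) : Multigraph where
  V := {v : G.V // v ∉ G.ends e}
  E := {e' : G.E // ∀ v : G.V, v ∈ G.ends e' → v ∉ G.ends e}
  ends := fun e' => (G.ends e'.val).attachWith (fun v hv => e'.prop v hv)

/-- Deletion of a vertex (together with all incident edges). -/
def deleteVertex (G : Multigraph) (v : G.V) : Multigraph where
  V := {w : G.V // w ≠ v}
  E := {e : G.E // v ∉ G.ends e}
  ends := fun e => (G.ends e.val).attachWith
    (fun w hw => fun hwv => e.prop (hwv ▸ hw))

/-- Number of connected components of the spanning subgraph `(V, S)`. -/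
noncomputable def k (G : Multigraph) (S : Finset G.E) : ℕ :=
  Nat.card (Quot (fun u v : G.V => ∃ e ∈ S, G.ends e = s(u, v)))

/-- Number of connected components of `(V(S), S)`, the graph on the vertices
covered by `S`. -/
noncomputable def kcov (G : Multigraph) (S : Finset G.E) : ℕ :=
  Nat.card (Quot (fun u v : {w : G.V // ∃ e ∈ S, w ∈ G.ends e} =>
    ∃ e ∈ S, G.ends e = s(u.val, v.val)))

/-- `V(A)` and `V(B)` are disjoint. -/
def CovDisjoint (G : Multigraph) (A B : Finset G.E) : Prop :=
  ∀ v : G.V, (∃ e ∈ A, v ∈ G.ends e) → ¬ (∃ e ∈ B, v ∈ G.ends e)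

instance (G : Multigraph) (A B : Finset G.E) : Decidable (G.CovDisjoint A B) := by
  unfold CovDisjoint; infer_instance

/-- The edge elimination polynomial (evaluated at `x y z` in a commutative ring):
`ξ(G,x,y,z) = Σ_{(A ⊔ B) ⊆ E} x^{k(A∪B)-k_cov(B)} y^{|A|+|B|-k_cov(B)} z^{k_cov(B)}`. -/
noncomputable def xi {R : Type*} [CommRing R] (G : Multigraph) (x y z : R) : R :=
  ∑ A : Finset G.E, ∑ B : Finset G.E,
    if G.CovDisjoint A B then
      x ^ (G.k (A ∪ B) - G.kcov B) * y ^ (A.card + B.card - G.kcov B) * z ^ G.kcov B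
    else 0

/-- Isomorphism of multigraphs. -/
structure Iso (G H : Multigraph) where
  vEquiv : G.V ≃ H.V
  eEquiv : G.E ≃ H.E
  ends_map : ∀ e : G.E, H.ends (eEquiv e) = (G.ends e).map vEquiv

end Multigraph

/-!
Sort the pairs `(A, B)` by where `e` lies; never in both, as its endpoints would be covered twice.
The pairs avoiding `e` are the terms of `ξ(G₋ₑ)`. Adding `e` to `A`, or to a `B` that already
touches an endpoint of `e`, changes no component count and adds one edge; these pairs are the terms
of `y·ξ(G/e)`, the two cases being whether the merged vertex of `G/e` is covered by `B`. Adding `e`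
to `B` when neither `A` nor `B` touches its endpoints makes `e` a component of its own, raising `k`,
`k_cov` and `|B|` by one; these pairs are the terms of `z·ξ(G†e)`.

All comparisons of component counts come from one fact: a surjection `p` of vertex sets induces a
bijection of components if it sends every edge to an edge or to a point, every edge downstairs
lifts along `p`, and `p` identifies only vertices joined by an edge.
-/

theorem Nat.card_quot_eq_of_surjective {α β : Type*} {r : α → α → Prop} {s : β → β → Prop}
    (p : α → β) (hp : Function.Surjective p)
    (hrel : ∀ a b, r a b → p a = p b ∨ s (p a) (p b))
    (hfib : ∀ a b, p a = p b → a = b ∨ r a b)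
    (hlift : ∀ c d, s c d → ∃ a b, p a = c ∧ p b = d ∧ r a b) :
    Nat.card (Quot r) = Nat.card (Quot s) := by
  have hfib' : ∀ a b, p a = p b → Quot.mk r a = Quot.mk r b := fun a b h => by
    rcases hfib a b h with rfl | h
    exacts [rfl, Quot.sound h]
  refine Nat.card_congr (Equiv.ofBijective (Quot.lift (fun a => Quot.mk s (p a)) fun a b h => ?_)
    ⟨?_, ?_⟩)
  · rcases hrel a b h with h | h
    exacts [congrArg _ h, Quot.sound h]
  · suffices key : ∀ c d, Relation.EqvGen s c d →
        ∀ a b, p a = c → p b = d → Quot.mk r a = Quot.mk r b by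
      rintro ⟨a⟩ ⟨b⟩ h
      exact key _ _ (Quot.eqvGen_exact h) a b rfl rfl
    intro c d h
    induction h with
    | rel c d hs =>
      obtain ⟨a', b', rfl, rfl, hr⟩ := hlift c d hs
      exact fun a b ha hb => (hfib' a a' ha).trans ((Quot.sound hr).trans (hfib' b' b hb.symm))
    | refl c => exact fun a b ha hb => hfib' a b (ha.trans hb.symm)
    | symm c d _ ih => exact fun a b ha hb => (ih b a hb ha).symm
    | trans c m d _ _ ih₁ ih₂ =>
      obtain ⟨m', rfl⟩ := hp m
      exact fun a b ha hb => (ih₁ a m' ha rfl).trans (ih₂ m' b rfl hb)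
  · rintro ⟨c⟩
    obtain ⟨a, rfl⟩ := hp c
    exact ⟨Quot.mk r a, rfl⟩

theorem Nat.card_quot_sumLiftRel {α β : Type*} [Finite α] [Finite β]
    (r : α → α → Prop) (s : β → β → Prop) :
    Nat.card (Quot (Sum.LiftRel r s)) = Nat.card (Quot r) + Nat.card (Quot s) := by
  rw [← Nat.card_sum]
  refine Nat.card_congr
    { toFun := Quot.lift (Sum.map (Quot.mk r) (Quot.mk s)) ?_
      invFun := Sum.elim
        (Quot.lift (fun a => Quot.mk _ (Sum.inl a)) fun _ _ h => Quot.sound (.inl h))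
        (Quot.lift (fun b => Quot.mk _ (Sum.inr b)) fun _ _ h => Quot.sound (.inr h))
      left_inv := Quot.ind (Sum.rec (fun _ => rfl) fun _ => rfl)
      right_inv := Sum.rec (Quot.ind fun _ => rfl) (Quot.ind fun _ => rfl) }
  rintro _ _ (h | h)
  exacts [congrArg Sum.inl (Quot.sound h), congrArg Sum.inr (Quot.sound h)]

theorem Sym2.exists_eq_mk_of_map_eq_mk {α β : Type*} {f : α → β} {z : Sym2 α} {c d : β}
    (h : z.map f = s(c, d)) : ∃ a b, f a = c ∧ f b = d ∧ z = s(a, b) := by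
  induction z using Sym2.ind with | _ a b => ?_
  rcases Sym2.eq_iff.1 h with ⟨rfl, rfl⟩ | ⟨rfl, rfl⟩
  exacts [⟨a, b, rfl, rfl, rfl⟩, ⟨b, a, rfl, rfl, Sym2.eq_swap⟩]

theorem Sym2.mem_attachWith {α : Type*} {P : α → Prop} {z : Sym2 α} (h : ∀ a ∈ z, P a)
    {x : {a // P a}} : x ∈ z.attachWith h ↔ x.val ∈ z := by
  conv_rhs => rw [← Sym2.attachWith_map_subtypeVal h]
  rw [Sym2.mem_map]
  exact ⟨fun hx => ⟨x, hx, rfl⟩, fun ⟨a, ha, hax⟩ => Subtype.ext hax ▸ ha⟩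

theorem Sym2.attachWith_eq_mk_iff {α : Type*} {P : α → Prop} {z : Sym2 α} (h : ∀ a ∈ z, P a)
    {x y : {a // P a}} : z.attachWith h = s(x, y) ↔ z = s(x.val, y.val) := by
  conv_rhs => rw [← Sym2.attachWith_map_subtypeVal h, ← Sym2.map_mk]
  exact (Sym2.map.injective Subtype.val_injective).eq_iff.symm

-- The filter's decidability is a separate argument so that it unifies with the instance found
-- at the call site (for a finite `α` that is usually not the one derived from `p`).
theorem Finset.sum_map_subtype_eq {α M : Type*} [Fintype α] [AddCommMonoid M] (p : α → Prop)
    [DecidablePred p] [DecidablePred fun S : Finset α => ∀ a ∈ S, p a] (f : Finset α → M) :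
    ∑ T : Finset {a // p a}, f (T.map (Function.Embedding.subtype p))
      = ∑ S : Finset α with ∀ a ∈ S, p a, f S := by
  rw [Finset.sum_subtype _ (p := fun S : Finset α => ∀ a ∈ S, p a) fun S => by simp]
  exact Fintype.sum_equiv (Equiv.finsetSubtypeComm p) _ _ fun _ => rfl

theorem Finset.sum_sum_map_subtype_eq {α M : Type*} [Fintype α] [AddCommMonoid M] (p : α → Prop)
    [DecidablePred p] [DecidablePred fun S : Finset α => ∀ a ∈ S, p a]
    (F : Finset α → Finset α → M) :
    ∑ T₁ : Finset {a // p a}, ∑ T₂ : Finset {a // p a},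
        F (T₁.map (Function.Embedding.subtype p)) (T₂.map (Function.Embedding.subtype p))
      = ∑ S₁ : Finset α with ∀ a ∈ S₁, p a, ∑ S₂ : Finset α with ∀ a ∈ S₂, p a, F S₁ S₂ :=
  (Finset.sum_congr rfl fun T₁ _ => Finset.sum_map_subtype_eq p (F (T₁.map _))).trans
    (Finset.sum_map_subtype_eq p fun S₁ => ∑ S₂ : Finset α with ∀ a ∈ S₂, p a, F S₁ S₂)

namespace Multigraph

section Components

variable (G : Multigraph)

def Linked (S : Finset G.E) (u v : G.V) : Prop := ∃ f ∈ S, G.ends f = s(u, v)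

def Covers (S : Finset G.E) (v : G.V) : Prop := ∃ f ∈ S, v ∈ G.ends f

noncomputable def numComponentsOn (P : G.V → Prop) (S : Finset G.E) : ℕ :=
  Nat.card (Quot fun u v : {w // P w} => G.Linked S u v)

def AvoidsEnds (e : G.E) (S : Finset G.E) : Prop :=
  ∀ f ∈ S, ∀ v : G.V, v ∈ G.ends f → v ∉ G.ends e

instance (e : G.E) (S : Finset G.E) : Decidable (G.AvoidsEnds e S) := by
  unfold AvoidsEnds; infer_instance

variable {G}

theorem k_eq_numComponentsOn (S : Finset G.E) : G.k S = G.numComponentsOn (fun _ => True) S :=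
  Nat.card_congr (Quot.congr (Equiv.subtypeUnivEquiv fun _ => trivial).symm fun _ _ => Iff.rfl)

theorem kcov_eq_numComponentsOn (S : Finset G.E) :
    G.kcov S = G.numComponentsOn (G.Covers S) S :=
  rfl

theorem linked_of_mem_ends {S : Finset G.E} {f : G.E} (hf : f ∈ S) {u v : G.V}
    (hu : u ∈ G.ends f) (hv : v ∈ G.ends f) (huv : u ≠ v) : G.Linked S u v :=
  ⟨f, hf, (Sym2.mem_and_mem_iff huv).1 ⟨hu, hv⟩⟩

theorem kcov_le_card (S : Finset G.E) : G.kcov S ≤ S.card := by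
  rw [← Nat.card_eq_finsetCard]
  refine Nat.card_le_card_of_surjective
    (fun f : S => Quot.mk _ ⟨(G.ends f).out.1, f, f.2, Sym2.out_fst_mem _⟩) ?_
  rintro ⟨w, f, hf, hw⟩
  refine ⟨⟨f, hf⟩, ?_⟩
  by_cases h : (G.ends f).out.1 = w
  · exact congrArg (Quot.mk _) (Subtype.ext h)
  · exact Quot.sound (linked_of_mem_ends hf (Sym2.out_fst_mem _) hw h)

theorem covers_insert {f : G.E} {S : Finset G.E} {v : G.V} :
    G.Covers (insert f S) v ↔ v ∈ G.ends f ∨ G.Covers S v :=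
  Finset.exists_mem_insert _ _ _

theorem avoidsEnds_iff {e : G.E} {S : Finset G.E} :
    G.AvoidsEnds e S ↔ ∀ v ∈ G.ends e, ¬ G.Covers S v := by
  simp only [AvoidsEnds, Covers]
  grind

theorem ne_of_avoidsEnds {e f : G.E} (hf : ∀ v : G.V, v ∈ G.ends f → v ∉ G.ends e) : f ≠ e :=
  fun h => hf _ (h ▸ Sym2.out_fst_mem _) (Sym2.out_fst_mem _)

theorem not_avoidsEnds_insert (e : G.E) (S : Finset G.E) : ¬ G.AvoidsEnds e (insert e S) :=
  fun h => ne_of_avoidsEnds (h e (Finset.mem_insert_self e S)) rfl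

theorem covDisjoint_iff {A B : Finset G.E} :
    G.CovDisjoint A B ↔ ∀ v, G.Covers A v → ¬ G.Covers B v :=
  Iff.rfl

theorem CovDisjoint.symm {A B : Finset G.E} (h : G.CovDisjoint A B) : G.CovDisjoint B A :=
  fun v hB hA => h v hA hB

theorem not_avoidsEnds_of_covers {e : G.E} {S : Finset G.E} {v : G.V} (hv : v ∈ G.ends e)
    (hS : G.Covers S v) : ¬ G.AvoidsEnds e S :=
  fun h => avoidsEnds_iff.1 h v hv hS

theorem covDisjoint_insert_right {e : G.E} {A B : Finset G.E} :
    G.CovDisjoint A (insert e B) ↔ G.AvoidsEnds e A ∧ G.CovDisjoint A B := by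
  simp only [covDisjoint_iff, covers_insert, avoidsEnds_iff, not_or]
  grind

end Components

section Delete

variable {G : Multigraph} (e : G.E)

variable (G) in
def deleteEmb : (G.deleteEdge e).E ↪ G.E := .subtype _

@[simp] theorem deleteEmb_apply (f : (G.deleteEdge e).E) : G.deleteEmb e f = f.val := rfl

theorem linked_deleteEdge {S : Finset (G.deleteEdge e).E} {u v : G.V} :
    (G.deleteEdge e).Linked S u v ↔ G.Linked (S.map (G.deleteEmb e)) u v := by
  simp only [Linked, Finset.mem_map, deleteEmb_apply, exists_exists_and_eq_and]
  rfl

theorem covers_deleteEdge {S : Finset (G.deleteEdge e).E} {v : G.V} :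
    (G.deleteEdge e).Covers S v ↔ G.Covers (S.map (G.deleteEmb e)) v := by
  simp only [Covers, Finset.mem_map, deleteEmb_apply, exists_exists_and_eq_and]
  rfl

theorem numComponentsOn_deleteEdge (P : G.V → Prop) (S : Finset (G.deleteEdge e).E) :
    (G.deleteEdge e).numComponentsOn P S = G.numComponentsOn P (S.map (G.deleteEmb e)) :=
  Nat.card_congr (Quot.congrRight fun _ _ => linked_deleteEdge e)

theorem k_deleteEdge (S : Finset (G.deleteEdge e).E) :
    (G.deleteEdge e).k S = G.k (S.map (G.deleteEmb e)) := by
  rw [k_eq_numComponentsOn, k_eq_numComponentsOn]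
  exact numComponentsOn_deleteEdge e _ S

theorem kcov_deleteEdge (S : Finset (G.deleteEdge e).E) :
    (G.deleteEdge e).kcov S = G.kcov (S.map (G.deleteEmb e)) := by
  rw [kcov_eq_numComponentsOn, kcov_eq_numComponentsOn]
  refine (numComponentsOn_deleteEdge e _ S).trans ?_
  exact congrArg (G.numComponentsOn · _) (funext fun _ => propext (covers_deleteEdge e))

theorem covDisjoint_deleteEdge {A B : Finset (G.deleteEdge e).E} :
    (G.deleteEdge e).CovDisjoint A B
      ↔ G.CovDisjoint (A.map (G.deleteEmb e)) (B.map (G.deleteEmb e)) :=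
  forall_congr' fun _ => imp_congr (covers_deleteEdge e) (not_congr (covers_deleteEdge e))

end Delete

section Contract

variable {G : Multigraph} (e : G.E)

variable (G) in
def contractEmb : (G.contractEdge e).E ↪ G.E := .subtype _

@[simp] theorem contractEmb_apply (f : (G.contractEdge e).E) : G.contractEmb e f = f.val := rfl

theorem val_mem_map_contractEmb {S : Finset (G.contractEdge e).E} {f : (G.contractEdge e).E} :
    f.val ∈ S.map (G.contractEmb e) ↔ f ∈ S :=
  Finset.mem_map' _

theorem val_mem_insert_map_contractEmb {S : Finset (G.contractEdge e).E}
    {f : (G.contractEdge e).E} : f.val ∈ insert e (S.map (G.contractEmb e)) ↔ f ∈ S := by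
  rw [Finset.mem_insert, val_mem_map_contractEmb, or_iff_right f.2]

theorem notMem_map_contractEmb (S : Finset (G.contractEdge e).E) :
    e ∉ S.map (G.contractEmb e) := by
  simp only [Finset.mem_map, contractEmb_apply, not_exists, not_and]
  exact fun f _ => f.2

variable (G) in
def contractProj (v : G.V) : (G.contractEdge e).V :=
  if h : v ∈ G.ends e then .inr () else .inl ⟨v, h⟩

theorem contractProj_of_mem {v : G.V} (h : v ∈ G.ends e) : G.contractProj e v = .inr () :=
  dif_pos h

theorem contractProj_of_notMem {v : G.V} (h : v ∉ G.ends e) :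
    G.contractProj e v = .inl ⟨v, h⟩ :=
  dif_neg h

theorem contractProj_eq_iff {u v : G.V} :
    G.contractProj e u = G.contractProj e v ↔ u = v ∨ u ∈ G.ends e ∧ v ∈ G.ends e := by
  by_cases hu : u ∈ G.ends e <;> by_cases hv : v ∈ G.ends e
  · rw [contractProj_of_mem e hu, contractProj_of_mem e hv]
    exact iff_of_true rfl (.inr ⟨hu, hv⟩)
  · simp [contractProj_of_mem e hu, contractProj_of_notMem e hv, hv, ne_of_mem_of_not_mem hu hv]
  · simp [contractProj_of_notMem e hu, contractProj_of_mem e hv, hu,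
      (ne_of_mem_of_not_mem hv hu).symm]
  · rw [contractProj_of_notMem e hu, contractProj_of_notMem e hv]
    simp only [hu, false_and, or_false]
    exact ⟨fun h => congrArg Subtype.val (Sum.inl_injective h), by rintro rfl; rfl⟩

theorem contractProj_surjective : Function.Surjective (G.contractProj e) := by
  rintro (w | ⟨⟩)
  · exact ⟨w.val, contractProj_of_notMem e w.2⟩
  · exact ⟨_, contractProj_of_mem e (Sym2.out_fst_mem _)⟩

theorem covers_contractEdge {S : Finset (G.contractEdge e).E} {v : G.V} :
    (G.contractEdge e).Covers S (G.contractProj e v)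
      ↔ ∃ u, G.Covers (S.map (G.contractEmb e)) u ∧ G.contractProj e u = G.contractProj e v := by
  constructor
  · rintro ⟨f, hf, hv⟩
    obtain ⟨u, hu, huv⟩ := Sym2.mem_map.1 hv
    exact ⟨u, ⟨_, Finset.mem_map_of_mem _ hf, hu⟩, huv⟩
  · rintro ⟨u, ⟨_, hg, hu⟩, huv⟩
    obtain ⟨f, hf, rfl⟩ := Finset.mem_map.1 hg
    exact ⟨f, hf, Sym2.mem_map.2 ⟨u, hu, huv⟩⟩

theorem covers_contractEdge_of_notMem {S : Finset (G.contractEdge e).E} {v : G.V}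
    (hv : v ∉ G.ends e) :
    (G.contractEdge e).Covers S (G.contractProj e v) ↔ G.Covers (S.map (G.contractEmb e)) v := by
  simp [covers_contractEdge, contractProj_eq_iff, hv]

theorem covers_contractEdge_of_mem {S : Finset (G.contractEdge e).E} {v : G.V}
    (hv : v ∈ G.ends e) :
    (G.contractEdge e).Covers S (G.contractProj e v)
      ↔ ¬ G.AvoidsEnds e (S.map (G.contractEmb e)) := by
  simp only [covers_contractEdge, contractProj_eq_iff, avoidsEnds_iff, hv, and_true, not_forall,
    not_not]
  grind

theorem numComponentsOn_contractEdge (P : G.V → Prop) (Q : (G.contractEdge e).V → Prop)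
    (T : Finset G.E) (S : Finset (G.contractEdge e).E)
    (hQ : ∀ v, Q (G.contractProj e v) ↔ P v) (hP : ∀ v, G.Covers T v → P v)
    (hT : ∀ f : (G.contractEdge e).E, f.val ∈ T ↔ f ∈ S)
    (he : ∀ v ∈ G.ends e, P v → e ∈ T) :
    G.numComponentsOn P T = (G.contractEdge e).numComponentsOn Q S := by
  refine Nat.card_quot_eq_of_surjective (fun v => ⟨G.contractProj e v, (hQ v).2 v.2⟩)
    ?_ ?_ ?_ ?_
  · rintro ⟨c, hc⟩
    obtain ⟨v, rfl⟩ := contractProj_surjective e c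
    exact ⟨⟨v, (hQ v).1 hc⟩, rfl⟩
  · rintro a b ⟨f, hf, hab⟩
    by_cases hfe : f = e
    · subst hfe
      refine .inl (Subtype.ext ((contractProj_eq_iff f).2 (.inr ⟨?_, ?_⟩))) <;>
        simp [hab]
    · exact .inr ⟨⟨f, hfe⟩, (hT ⟨f, hfe⟩).1 hf, congrArg (Sym2.map _) hab⟩
  · rintro a b hab
    by_cases h : a = b
    · exact .inl h
    rcases (contractProj_eq_iff e).1 (congrArg Subtype.val hab) with h' | ⟨ha, hb⟩
    · exact absurd (Subtype.ext h') h
    · exact .inr (linked_of_mem_ends (he _ ha a.2) ha hb fun h' => h (Subtype.ext h'))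
  · rintro c d ⟨g, hg, hcd⟩
    obtain ⟨x, y, hx, hy, hxy⟩ := Sym2.exists_eq_mk_of_map_eq_mk hcd
    have hgT := (hT g).2 hg
    exact ⟨⟨x, hP x ⟨_, hgT, hxy ▸ Sym2.mem_mk_left x y⟩⟩,
      ⟨y, hP y ⟨_, hgT, hxy ▸ Sym2.mem_mk_right x y⟩⟩, Subtype.ext hx, Subtype.ext hy, _, hgT, hxy⟩

theorem k_contractEdge (S : Finset (G.contractEdge e).E) :
    (G.contractEdge e).k S = G.k (insert e (S.map (G.contractEmb e))) := by
  rw [k_eq_numComponentsOn, k_eq_numComponentsOn]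
  exact (numComponentsOn_contractEdge e _ _ _ _ (fun _ => Iff.rfl) (fun _ _ => trivial)
    (fun _ => val_mem_insert_map_contractEmb e) fun _ _ _ => Finset.mem_insert_self _ _).symm

theorem kcov_contractEdge_of_avoidsEnds {S : Finset (G.contractEdge e).E}
    (hS : G.AvoidsEnds e (S.map (G.contractEmb e))) :
    (G.contractEdge e).kcov S = G.kcov (S.map (G.contractEmb e)) := by
  rw [kcov_eq_numComponentsOn, kcov_eq_numComponentsOn]
  refine (numComponentsOn_contractEdge e _ _ _ _ (fun v => ?_) (fun _ => id)
    (fun _ => val_mem_map_contractEmb e) fun v hv hcov => ?_).symm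
  · by_cases hv : v ∈ G.ends e
    · exact iff_of_false (by simpa [covers_contractEdge_of_mem e hv]) (avoidsEnds_iff.1 hS v hv)
    · exact covers_contractEdge_of_notMem e hv
  · exact absurd hcov (avoidsEnds_iff.1 hS v hv)

theorem kcov_contractEdge_of_not_avoidsEnds {S : Finset (G.contractEdge e).E}
    (hS : ¬ G.AvoidsEnds e (S.map (G.contractEmb e))) :
    (G.contractEdge e).kcov S = G.kcov (insert e (S.map (G.contractEmb e))) := by
  rw [kcov_eq_numComponentsOn, kcov_eq_numComponentsOn]
  refine (numComponentsOn_contractEdge e _ _ _ _ (fun v => ?_) (fun _ => id)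
    (fun _ => val_mem_insert_map_contractEmb e) fun _ _ _ => Finset.mem_insert_self _ _).symm
  by_cases hv : v ∈ G.ends e
  · exact iff_of_true ((covers_contractEdge_of_mem e hv).2 hS) (covers_insert.2 (.inl hv))
  · rw [covers_contractEdge_of_notMem e hv, covers_insert, or_iff_right hv]

theorem covDisjoint_contractEdge_iff {A B : Finset (G.contractEdge e).E} :
    (G.contractEdge e).CovDisjoint A B ↔ ∀ v,
      (G.contractEdge e).Covers A (G.contractProj e v) →
        ¬ (G.contractEdge e).Covers B (G.contractProj e v) :=
  (contractProj_surjective e).forall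

theorem covDisjoint_contractEdge_of_avoidsEnds {A B : Finset (G.contractEdge e).E}
    (hB : G.AvoidsEnds e (B.map (G.contractEmb e))) :
    (G.contractEdge e).CovDisjoint A B
      ↔ G.CovDisjoint (insert e (A.map (G.contractEmb e))) (B.map (G.contractEmb e)) := by
  refine (covDisjoint_contractEdge_iff e).trans
    (covDisjoint_iff.trans (forall_congr' fun v => ?_)).symm
  by_cases hv : v ∈ G.ends e
  · simp [covers_contractEdge_of_mem e hv, covers_insert, hv, hB, avoidsEnds_iff.1 hB v hv]
  · simp [covers_contractEdge_of_notMem e hv, covers_insert, hv]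

theorem covDisjoint_contractEdge_of_not_avoidsEnds {A B : Finset (G.contractEdge e).E}
    (hB : ¬ G.AvoidsEnds e (B.map (G.contractEmb e))) :
    (G.contractEdge e).CovDisjoint A B
      ↔ G.CovDisjoint (A.map (G.contractEmb e)) (insert e (B.map (G.contractEmb e))) := by
  refine (covDisjoint_contractEdge_iff e).trans (Iff.trans ?_ covDisjoint_insert_right.symm)
  constructor
  · intro h
    have hA : G.AvoidsEnds e (A.map (G.contractEmb e)) := avoidsEnds_iff.2 fun v hv hvA =>
      h v ((covers_contractEdge_of_mem e hv).2 (not_avoidsEnds_of_covers hv hvA))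
        ((covers_contractEdge_of_mem e hv).2 hB)
    refine ⟨hA, fun v hvA hvB => ?_⟩
    have hv : v ∉ G.ends e := fun hv => avoidsEnds_iff.1 hA v hv hvA
    exact h v ((covers_contractEdge_of_notMem e hv).2 hvA)
      ((covers_contractEdge_of_notMem e hv).2 hvB)
  · rintro ⟨hA, h⟩ v hvA
    by_cases hv : v ∈ G.ends e
    · exact absurd hA ((covers_contractEdge_of_mem e hv).1 hvA)
    · rw [covers_contractEdge_of_notMem e hv] at hvA ⊢
      exact h v hvA

end Contract

section Extract

variable {G : Multigraph} (e : G.E)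

variable (G) in
def extractEmb : (G.extractEdge e).E ↪ G.E := .subtype _

@[simp] theorem extractEmb_apply (f : (G.extractEdge e).E) : G.extractEmb e f = f.val := rfl

theorem covers_extractEdge {S : Finset (G.extractEdge e).E} {w : (G.extractEdge e).V} :
    (G.extractEdge e).Covers S w ↔ G.Covers (S.map (G.extractEmb e)) w.val := by
  constructor
  · rintro ⟨f, hf, hw⟩
    exact ⟨_, Finset.mem_map_of_mem _ hf, (Sym2.mem_attachWith _).1 hw⟩
  · rintro ⟨_, hg, hw⟩
    obtain ⟨f, hf, rfl⟩ := Finset.mem_map.1 hg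
    exact ⟨f, hf, (Sym2.mem_attachWith _).2 hw⟩

theorem avoidsEnds_map_extractEmb (S : Finset (G.extractEdge e).E) :
    G.AvoidsEnds e (S.map (G.extractEmb e)) := by
  simp only [AvoidsEnds, Finset.mem_map, extractEmb_apply, forall_exists_index, and_imp]
  rintro _ f _ rfl
  exact f.2

theorem notMem_map_extractEmb (S : Finset (G.extractEdge e).E) :
    e ∉ S.map (G.extractEmb e) :=
  fun he => not_avoidsEnds_insert e _ (Finset.insert_eq_of_mem he ▸ avoidsEnds_map_extractEmb e S)

theorem numComponentsOn_extractEdge (P : G.V → Prop) (Q : (G.extractEdge e).V → Prop)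
    (S : Finset (G.extractEdge e).E) (hQ : ∀ w, Q w ↔ P w.val)
    (hP : ∀ v, G.Covers (insert e (S.map (G.extractEmb e))) v → P v) :
    G.numComponentsOn P (insert e (S.map (G.extractEmb e)))
      = (G.extractEdge e).numComponentsOn Q S + 1 := by
  -- the `Unit` summand is the component spanned by `e`
  have hunit : Nat.card (Quot fun _ _ : Unit => False) = 1 := Nat.card_unique
  rw [numComponentsOn, numComponentsOn, ← hunit, ← Nat.card_quot_sumLiftRel]
  refine Nat.card_quot_eq_of_surjective (fun v => if h : v.val ∈ G.ends e then .inr ()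
    else .inl ⟨⟨v.val, h⟩, (hQ _).2 v.2⟩) ?_ ?_ ?_ ?_
  · rintro (w | ⟨⟩)
    · exact ⟨⟨w.val.val, (hQ _).1 w.2⟩, dif_neg w.val.2⟩
    · have hv := Sym2.out_fst_mem (G.ends e)
      exact ⟨⟨_, hP _ (covers_insert.2 (.inl hv))⟩, dif_pos hv⟩
  · rintro a b ⟨f, hf, hab⟩
    have ha : a.val ∈ G.ends f := hab ▸ Sym2.mem_mk_left _ _
    have hb : b.val ∈ G.ends f := hab ▸ Sym2.mem_mk_right _ _
    rcases Finset.mem_insert.1 hf with rfl | hf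
    · exact .inl (by rw [dif_pos ha, dif_pos hb])
    · obtain ⟨g, hg, rfl⟩ := Finset.mem_map.1 hf
      refine .inr ?_
      rw [dif_neg (g.2 _ ha), dif_neg (g.2 _ hb)]
      exact .inl ⟨g, hg, (Sym2.attachWith_eq_mk_iff _).2 hab⟩
  · rintro a b hab
    by_cases h : a = b
    · exact .inl h
    refine .inr ?_
    by_cases ha : a.val ∈ G.ends e <;> by_cases hb : b.val ∈ G.ends e <;>
      simp only [ha, hb, dif_pos, dif_neg, not_false_eq_true, reduceCtorEq, Sum.inl.injEq] at hab
    · exact linked_of_mem_ends (Finset.mem_insert_self _ _) ha hb fun h' => h (Subtype.ext h')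
    · exact absurd (Subtype.ext (congrArg (fun w => w.val.val) hab)) h
  · rintro _ _ (@⟨c, d, ⟨g, hg, hcd⟩⟩ | ⟨⟨⟩⟩)
    exact ⟨⟨c.val.val, (hQ _).1 c.2⟩, ⟨d.val.val, (hQ _).1 d.2⟩, dif_neg c.val.2, dif_neg d.val.2,
      g.val, Finset.mem_insert_of_mem (Finset.mem_map_of_mem _ hg),
      (Sym2.attachWith_eq_mk_iff fun v hv => g.2 v hv).1 hcd⟩

theorem k_extractEdge (S : Finset (G.extractEdge e).E) :
    G.k (insert e (S.map (G.extractEmb e))) = (G.extractEdge e).k S + 1 := by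
  rw [k_eq_numComponentsOn, k_eq_numComponentsOn]
  exact numComponentsOn_extractEdge e _ _ S (fun _ => Iff.rfl) fun _ _ => trivial

theorem kcov_extractEdge (S : Finset (G.extractEdge e).E) :
    G.kcov (insert e (S.map (G.extractEmb e))) = (G.extractEdge e).kcov S + 1 := by
  rw [kcov_eq_numComponentsOn, kcov_eq_numComponentsOn]
  refine numComponentsOn_extractEdge e _ _ S (fun w => ?_) fun _ => id
  rw [covers_extractEdge, covers_insert, or_iff_right w.2]

theorem covDisjoint_extractEdge {A B : Finset (G.extractEdge e).E} :
    (G.extractEdge e).CovDisjoint A B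
      ↔ G.CovDisjoint (A.map (G.extractEmb e)) (insert e (B.map (G.extractEmb e))) := by
  rw [covDisjoint_insert_right, and_iff_right (avoidsEnds_map_extractEmb e A)]
  refine ⟨fun h v hvA => ?_, fun h w hwA hwB => h w.val ((covers_extractEdge e).1 hwA)
    ((covers_extractEdge e).1 hwB)⟩
  have hv : v ∉ G.ends e := fun hv => avoidsEnds_iff.1 (avoidsEnds_map_extractEmb e A) v hv hvA
  exact fun hvB => h ⟨v, hv⟩ ((covers_extractEdge e).2 hvA) ((covers_extractEdge e).2 hvB)

end Extract

section Terms

variable {R : Type*} [CommRing R] (x y z : R)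

noncomputable def term (G : Multigraph) (A B : Finset G.E) : R :=
  if G.CovDisjoint A B then
    x ^ (G.k (A ∪ B) - G.kcov B) * y ^ (A.card + B.card - G.kcov B) * z ^ G.kcov B
  else 0

theorem xi_eq_sum_term (G : Multigraph) : G.xi x y z = ∑ A, ∑ B, G.term x y z A B := rfl

theorem term_eq_zero {G : Multigraph} {A B : Finset G.E} (h : ¬ G.CovDisjoint A B) :
    G.term x y z A B = 0 :=
  if_neg h

theorem term_eq_of_counts {G H : Multigraph} {A B : Finset G.E} {A' B' : Finset H.E} (i j : ℕ)
    (hdisj : G.CovDisjoint A B ↔ H.CovDisjoint A' B')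
    (hk : G.k (A ∪ B) = H.k (A' ∪ B') + i) (hkcov : G.kcov B = H.kcov B' + i)
    (hcard : A.card + B.card = A'.card + B'.card + i + j) :
    G.term x y z A B = y ^ j * z ^ i * H.term x y z A' B' := by
  have hle : H.kcov B' ≤ A'.card + B'.card := (kcov_le_card B').trans (Nat.le_add_left _ _)
  unfold term
  by_cases h : H.CovDisjoint A' B'
  · rw [if_pos (hdisj.2 h), if_pos h, hk, hkcov, hcard, Nat.add_sub_add_right,
      show A'.card + B'.card + i + j - (H.kcov B' + i) = A'.card + B'.card - H.kcov B' + j by omega]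
    ring
  · rw [if_neg (mt hdisj.1 h), if_neg h, mul_zero]

variable {G : Multigraph} (e : G.E)

theorem term_deleteEdge (A B : Finset (G.deleteEdge e).E) :
    G.term x y z (A.map (G.deleteEmb e)) (B.map (G.deleteEmb e))
      = (G.deleteEdge e).term x y z A B := by
  simpa using term_eq_of_counts x y z 0 0 (covDisjoint_deleteEdge e).symm
    (by rw [add_zero, ← Finset.map_union, k_deleteEdge]) (kcov_deleteEdge e B).symm (by simp)

theorem mul_term_contractEdge (A B : Finset (G.contractEdge e).E) :
    y * (G.contractEdge e).term x y z A B
      = if G.AvoidsEnds e (B.map (G.contractEmb e))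
        then G.term x y z (insert e (A.map (G.contractEmb e))) (B.map (G.contractEmb e))
        else G.term x y z (A.map (G.contractEmb e)) (insert e (B.map (G.contractEmb e))) := by
  split_ifs with hB
  · simpa using (term_eq_of_counts x y z 0 1 (covDisjoint_contractEdge_of_avoidsEnds e hB).symm
      (by rw [add_zero, Finset.insert_union, ← Finset.map_union, k_contractEdge])
      (kcov_contractEdge_of_avoidsEnds e hB).symm
      (by rw [Finset.card_insert_of_notMem (notMem_map_contractEmb e A), Finset.card_map,
        Finset.card_map]; ring)).symm
  · simpa using (term_eq_of_counts x y z 0 1 (covDisjoint_contractEdge_of_not_avoidsEnds e hB).symm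
      (by rw [add_zero, Finset.union_insert, ← Finset.map_union, k_contractEdge])
      (kcov_contractEdge_of_not_avoidsEnds e hB).symm
      (by rw [Finset.card_insert_of_notMem (notMem_map_contractEmb e B), Finset.card_map,
        Finset.card_map]; ring)).symm

theorem term_extractEdge (A B : Finset (G.extractEdge e).E) :
    G.term x y z (A.map (G.extractEmb e)) (insert e (B.map (G.extractEmb e)))
      = z * (G.extractEdge e).term x y z A B := by
  simpa using term_eq_of_counts x y z 1 0 (covDisjoint_extractEdge e).symm
    (by rw [Finset.union_insert, ← Finset.map_union, k_extractEdge]) (kcov_extractEdge e B)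
    (by rw [Finset.card_insert_of_notMem (notMem_map_extractEmb e B), Finset.card_map,
      Finset.card_map]; ring)

end Terms

section Sums

variable {G : Multigraph} (e : G.E) {M : Type*} [AddCommMonoid M]

theorem sum_split (f : Finset G.E → M) :
    ∑ A, f A = ∑ A with ∀ a ∈ A, a ≠ e, (f A + f (insert e A)) := by
  have hfilter : (Finset.univ.erase e).powerset = Finset.univ.filter fun A => ∀ a ∈ A, a ≠ e := by
    ext A
    simp [Finset.subset_iff]
  rw [Finset.sum_add_distrib, ← hfilter, ← Finset.sum_powerset_insert (Finset.notMem_erase e _),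
    Finset.insert_erase (Finset.mem_univ e), Finset.powerset_univ]

theorem sum_sum_split (F : Finset G.E → Finset G.E → M) :
    ∑ A, ∑ B, F A B = ∑ A with ∀ a ∈ A, a ≠ e, ∑ B with ∀ b ∈ B, b ≠ e,
      (F A B + F (insert e A) B + F A (insert e B) + F (insert e A) (insert e B)) := by
  simp only [sum_split e, Finset.sum_add_distrib]
  abel

theorem sum_avoidsEnds_eq (g : Finset G.E → M) :
    ∑ A with ∀ f ∈ A, ∀ v : G.V, v ∈ G.ends f → v ∉ G.ends e, g A
      = ∑ A with ∀ a ∈ A, a ≠ e, if G.AvoidsEnds e A then g A else 0 := by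
  rw [← Finset.sum_filter, Finset.filter_filter]
  refine Finset.sum_congr (Finset.filter_congr fun A _ => ?_) fun _ _ => rfl
  exact ⟨fun h => ⟨fun a ha => ne_of_avoidsEnds (h a ha), h⟩, And.right⟩

end Sums

section Recurrence

variable {R : Type*} [CommRing R] (x y z : R) {G : Multigraph} (e : G.E)

theorem term_split (A B : Finset G.E) :
    G.term x y z A B + G.term x y z (insert e A) B + G.term x y z A (insert e B)
        + G.term x y z (insert e A) (insert e B)
      = G.term x y z A B
        + (if G.AvoidsEnds e B then G.term x y z (insert e A) B
          else G.term x y z A (insert e B))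
        + if G.AvoidsEnds e A ∧ G.AvoidsEnds e B then G.term x y z A (insert e B) else 0 := by
  have hee : G.term x y z (insert e A) (insert e B) = 0 :=
    term_eq_zero x y z fun h => not_avoidsEnds_insert e A (covDisjoint_insert_right.1 h).1
  by_cases hB : G.AvoidsEnds e B
  · by_cases hA : G.AvoidsEnds e A
    · rw [if_pos hB, if_pos ⟨hA, hB⟩, hee]
      ring
    · have hAe : G.term x y z A (insert e B) = 0 :=
        term_eq_zero x y z fun h => hA (covDisjoint_insert_right.1 h).1
      rw [if_pos hB, if_neg fun h => hA h.1, hee, hAe]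
      ring
  · have heB : G.term x y z (insert e A) B = 0 :=
      term_eq_zero x y z fun h => hB (covDisjoint_insert_right.1 h.symm).1
    rw [if_neg hB, if_neg fun h => hB h.2, hee, heB]
    ring

theorem xi_deleteEdge_eq_sum :
    (G.deleteEdge e).xi x y z
      = ∑ A with ∀ a ∈ A, a ≠ e, ∑ B with ∀ b ∈ B, b ≠ e, G.term x y z A B := by
  rw [xi_eq_sum_term]
  simp_rw [← term_deleteEdge]
  exact Finset.sum_sum_map_subtype_eq (· ≠ e) (G.term x y z)

theorem mul_xi_contractEdge_eq_sum :
    y * (G.contractEdge e).xi x y z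
      = ∑ A with ∀ a ∈ A, a ≠ e, ∑ B with ∀ b ∈ B, b ≠ e,
          if G.AvoidsEnds e B then G.term x y z (insert e A) B
          else G.term x y z A (insert e B) := by
  rw [xi_eq_sum_term, Finset.mul_sum]
  simp_rw [Finset.mul_sum, mul_term_contractEdge]
  exact Finset.sum_sum_map_subtype_eq (· ≠ e) fun A B => if G.AvoidsEnds e B
    then G.term x y z (insert e A) B else G.term x y z A (insert e B)

theorem mul_xi_extractEdge_eq_sum :
    z * (G.extractEdge e).xi x y z
      = ∑ A with ∀ a ∈ A, a ≠ e, ∑ B with ∀ b ∈ B, b ≠ e,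
          if G.AvoidsEnds e A ∧ G.AvoidsEnds e B then G.term x y z A (insert e B) else 0 := by
  rw [xi_eq_sum_term, Finset.mul_sum]
  simp_rw [Finset.mul_sum, ← term_extractEdge]
  refine (Finset.sum_sum_map_subtype_eq (fun f => ∀ v : G.V, v ∈ G.ends f → v ∉ G.ends e)
    fun A B => G.term x y z A (insert e B)).trans ?_
  simp_rw [sum_avoidsEnds_eq e, ite_and]
  refine Finset.sum_congr rfl fun A _ => ?_
  split_ifs <;> simp

end Recurrence

end Multigraph

open MvPolynomial Multigraph in
/-- For any finite multigraph `G` and edge `e`, the edge elimination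
polynomial satisfies `ξ(G) = ξ(G₋ₑ) + y·ξ(G/e) + z·ξ(G†e)` in `ℤ[x,y,z]`. -/
theorem xi_edge_elimination (G : Multigraph) (e : G.E) :
    G.xi (X 0 : MvPolynomial (Fin 3) ℤ) (X 1) (X 2) =
      (G.deleteEdge e).xi (X 0) (X 1) (X 2)
        + X 1 * (G.contractEdge e).xi (X 0) (X 1) (X 2)
        + X 2 * (G.extractEdge e).xi (X 0) (X 1) (X 2) := by
  rw [xi_eq_sum_term, sum_sum_split e, xi_deleteEdge_eq_sum, mul_xi_contractEdge_eq_sum,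
    mul_xi_extractEdge_eq_sum]
  simp only [← Finset.sum_add_distrib, term_split]
end

section
/- Let R be a commutative ring and let w, x, y, z ∈ R. Suppose f is an isomorphism-invariant function from finite multigraphs to R satisfying f(∅) = 1, f(E₁) = x, f(G₁ ⊕ G₂) = f(G₁)·f(G₂), and f(G) = w·f(G_{−e}) + y·f(G_{/e}) + z·f(G_{†e}) for every finite multigraph G and every edge e of G. Then z·(w − 1)·((w − 1)x² + xy + z) = 0 in R. In particular, if R = ℤ[w, x, y, z] with w, x, y, z algebraically independent indeterminates, then no such function f exists. -/
/-- An isomorphism-invariant function on finite multigraphs. -/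
def Multigraph.Invariant {R : Type*} (f : Multigraph → R) : Prop :=
  ∀ G H : Multigraph, Nonempty (G.Iso H) → f G = f H

/-!
Let `P_k = path k` be the path on `k` vertices, so `P_0 = ∅` and `P_1 = E₁`. Deleting, contracting
and extracting the edge joining the vertices `m` and `m + 1` of `P_{m+n+2}` leaves
`P_{m+1} ⊕ P_{n+1}`, `P_{m+n+1}` and `P_m ⊕ P_n`, so
`f(P_{m+n+2}) = w f(P_{m+1}) f(P_{n+1}) + y f(P_{m+n+1}) + z f(P_m) f(P_n)`.
Expanding `P_4` along an end edge and along its middle edge and eliminating `f(P_2)`, `f(P_3)`,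
the two values differ by `z (w - 1) ((w - 1) x² + x y + z)`. At `w = x = y = 0`, `z = 1` this
is `-1`, which rules out `ℤ[w, x, y, z]`.
-/

namespace Multigraph

def path (k : ℕ) : Multigraph where
  V := Fin k
  E := Fin (k - 1)
  ends i := s(⟨i, by omega⟩, ⟨i + 1, by omega⟩)

def pathZeroIso : Iso (path 0) emptyGraph where
  vEquiv := finZeroEquiv
  eEquiv := finZeroEquiv
  ends_map e := e.elim0

def pathOneIso : Iso (path 1) singleVertex where
  vEquiv := finOneEquiv
  eEquiv := finZeroEquiv
  ends_map e := e.elim0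

theorem consecutive_pairs_disjoint_iff {N a b : ℕ} (ha : a + 1 < N) (hb : b + 1 < N) :
    (∀ v : Fin N, v ∈ s(⟨a, by omega⟩, ⟨a + 1, ha⟩) → v ∉ s(⟨b, by omega⟩, ⟨b + 1, hb⟩)) ↔
      a + 1 < b ∨ b + 1 < a := by
  rw [Sym2.forall_mem_pair]
  simp only [Sym2.mem_iff, Fin.ext_iff]
  omega

@[simps]
def finSplitAfter (m n : ℕ) : Fin (m + n + 2) ≃ Fin (m + 1) ⊕ Fin (n + 1) where
  toFun v := if h : (v : ℕ) < m + 1 then .inl ⟨v, h⟩ else .inr ⟨v - (m + 1), by omega⟩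
  invFun := Sum.elim (fun u => ⟨u, by omega⟩) (fun u => ⟨u + (m + 1), by omega⟩)
  left_inv v := by
    dsimp only
    split_ifs <;> ext <;> simp
    omega
  right_inv u := by rcases u with u | u <;> simp <;> omega

@[simps]
def finSplitAround (m n : ℕ) :
    {e : Fin (m + n + 1) // e ≠ ⟨m, by omega⟩} ≃ Fin m ⊕ Fin n where
  toFun e := if h : (e : ℕ) < m then .inl ⟨e, h⟩ else .inr ⟨e - (m + 1), by grind⟩
  invFun := Sum.elim (fun u => ⟨⟨u, by omega⟩, by grind⟩)
    (fun u => ⟨⟨u + (m + 1), by omega⟩, by grind⟩)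
  left_inv e := by
    have := e.2
    simp only [ne_eq, Fin.ext_iff] at this
    dsimp only
    split_ifs <;> ext <;> simp
    omega
  right_inv u := by
    rcases u with u | u <;> simp
    omega

@[simps]
def finContractAt (m n : ℕ) :
    {v : Fin (m + n + 2) // v ∉ s(⟨m, by omega⟩, ⟨m + 1, by omega⟩)} ⊕ Unit ≃
      Fin (m + n + 1) where
  toFun := Sum.elim (fun v => if h : (v : ℕ) < m then ⟨v, by omega⟩ else ⟨v - 1, by grind⟩)
    (fun _ => ⟨m, by omega⟩)
  invFun u := if h : (u : ℕ) < m then .inl ⟨⟨u, by omega⟩, by simp [Fin.ext_iff]; omega⟩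
    else if h' : (u : ℕ) = m then .inr ()
    else .inl ⟨⟨u + 1, by grind⟩, by simp [Fin.ext_iff]; omega⟩
  left_inv v := by
    rcases v with ⟨v, hv⟩ | _
    · simp only [Sym2.mem_iff, Fin.ext_iff, not_or] at hv
      by_cases h : (v : ℕ) < m
      · simp [h]
      · simp only [Sum.elim_inl, dif_neg h]
        split_ifs <;> first | omega | simp [Fin.ext_iff]; omega
    · simp
  right_inv u := by
    by_cases h : (u : ℕ) < m
    · simp [h]
    · by_cases h' : (u : ℕ) = m
      · simp [h', Fin.ext_iff]
      · simp [h, h', Fin.ext_iff]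
        omega

theorem finContractAt_collapse (m n : ℕ) (v : Fin (m + n + 2)) :
    finContractAt m n
        (if h : v ∈ s(⟨m, by omega⟩, ⟨m + 1, by omega⟩) then .inr () else .inl ⟨v, h⟩) =
      ⟨if (v : ℕ) ≤ m then v else v - 1, by split_ifs <;> omega⟩ := by
  ext
  simp only [Sym2.mem_iff, Fin.ext_iff]
  split_ifs <;> simp [apply_dite Fin.val] <;> omega

@[simps]
def finExtractAt (m n : ℕ) :
    {v : Fin (m + n + 2) // v ∉ s(⟨m, by omega⟩, ⟨m + 1, by omega⟩)} ≃ Fin m ⊕ Fin n where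
  toFun v := if h : (v : ℕ) < m then .inl ⟨v, h⟩ else .inr ⟨v - (m + 2), by grind⟩
  invFun := Sum.elim (fun u => ⟨⟨u, by omega⟩, by simp [Fin.ext_iff]; omega⟩)
    (fun u => ⟨⟨u + (m + 2), by omega⟩, by simp [Fin.ext_iff]; omega⟩)
  left_inv v := by
    rcases v with ⟨v, hv⟩
    simp only [Sym2.mem_iff, Fin.ext_iff, not_or] at hv
    by_cases h : (v : ℕ) < m
    · simp [h]
    · simp [h, Fin.ext_iff]
      omega
  right_inv u := by
    rcases u with u | u <;> simp
    omega

@[simps]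
def finExtractEdgesAt (m n : ℕ) :
    {e : Fin (m + n + 1) // ∀ v : Fin (m + n + 2), v ∈ s(⟨e, by omega⟩, ⟨e + 1, by omega⟩) →
      v ∉ s(⟨m, by omega⟩, ⟨m + 1, by omega⟩)} ≃ Fin (m - 1) ⊕ Fin (n - 1) where
  toFun e := if h : (e : ℕ) < m then .inl ⟨e, by have := (consecutive_pairs_disjoint_iff _ _).1 e.2; omega⟩
    else .inr ⟨e - (m + 2), by have := (consecutive_pairs_disjoint_iff _ _).1 e.2; omega⟩
  invFun := Sum.elim
    (fun u => ⟨⟨u, by omega⟩, (consecutive_pairs_disjoint_iff _ _).2 (by dsimp only; omega)⟩)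
    (fun u => ⟨⟨u + (m + 2), by omega⟩, (consecutive_pairs_disjoint_iff _ _).2 (by dsimp only; omega)⟩)
  left_inv e := by
    rcases e with ⟨e, he⟩
    rw [consecutive_pairs_disjoint_iff] at he
    by_cases h : (e : ℕ) < m
    · simp [h]
    · simp [h, Fin.ext_iff]
      omega
  right_inv u := by
    rcases u with u | u
    · have : (u : ℕ) < m := by have := u.2; omega
      simp [this]
    · simp
      omega

-- In the proofs of `ends_map`, `change` restates the goal in terms of the bijections above,
-- whose types agree with those of the graphs only up to unfolding, so `simp` cannot see them.

def pathDeleteEdgeIso (m n : ℕ) :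
    Iso ((path (m + n + 2)).deleteEdge ⟨m, by omega⟩)
      ((path (m + 1)).disjUnion (path (n + 1))) where
  vEquiv := finSplitAfter m n
  eEquiv := finSplitAround m n
  ends_map := by
    rintro ⟨⟨e, he⟩, hne⟩
    have hem : e ≠ m := fun h => hne (by subst h; rfl)
    change ((path (m + 1)).disjUnion (path (n + 1))).ends (finSplitAround m n ⟨⟨e, he⟩, hne⟩) =
      s(finSplitAfter m n ⟨e, by omega⟩, finSplitAfter m n ⟨e + 1, by omega⟩)
    by_cases h : e < m
    · simp [h, h.le, path, disjUnion]
    · simp [h, show ¬ e ≤ m by omega, path, disjUnion]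
      omega

def pathContractEdgeIso (m n : ℕ) :
    Iso ((path (m + n + 2)).contractEdge ⟨m, by omega⟩) (path (m + n + 1)) where
  vEquiv := finContractAt m n
  eEquiv := (finSplitAround m n).trans finSumFinEquiv
  ends_map := by
    rintro ⟨⟨e, he⟩, hne⟩
    have hem : e ≠ m := fun h => hne (by subst h; rfl)
    change (path (m + n + 1)).ends (finSumFinEquiv (finSplitAround m n ⟨⟨e, he⟩, hne⟩)) =
      Sym2.map (finContractAt m n) (Sym2.map (fun v : Fin (m + n + 2) =>
        if h : v ∈ s(⟨m, by omega⟩, ⟨m + 1, by omega⟩) then Sum.inr () else Sum.inl ⟨v, h⟩)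
        s(⟨e, by omega⟩, ⟨e + 1, by omega⟩))
    simp only [Sym2.map_mk, finContractAt_collapse]
    by_cases h : e < m
    · simp [h, path, Fin.ext_iff]
      omega
    · simp [h, path, Fin.ext_iff]
      split_ifs <;> omega

def pathExtractEdgeIso (m n : ℕ) :
    Iso ((path (m + n + 2)).extractEdge ⟨m, by omega⟩) ((path m).disjUnion (path n)) where
  vEquiv := finExtractAt m n
  eEquiv := finExtractEdgesAt m n
  ends_map := by
    rintro ⟨⟨e, he⟩, hdisj⟩
    change ((path m).disjUnion (path n)).ends (finExtractEdgesAt m n ⟨⟨e, he⟩, hdisj⟩) =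
      Sym2.map (finExtractAt m n) s(⟨⟨e, by omega⟩, hdisj _ (Sym2.mem_mk_left _ _)⟩,
        ⟨⟨e + 1, by omega⟩, hdisj _ (Sym2.mem_mk_right _ _)⟩)
    have hsep : e + 1 < m ∨ m + 1 < e := (consecutive_pairs_disjoint_iff (by omega) (by omega)).1 hdisj
    by_cases h : e < m
    · simp [h, path, disjUnion, Fin.ext_iff]
      omega
    · simp [h, show ¬ e + 1 < m by omega, path, disjUnion, Fin.ext_iff]
      omega

section Recurrence

variable {R : Type*} [CommRing R] {w x y z : R} {f : Multigraph → R}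

theorem path_recurrence (hinv : Invariant f)
    (hmul : ∀ G₁ G₂ : Multigraph, f (G₁.disjUnion G₂) = f G₁ * f G₂)
    (hrec : ∀ (G : Multigraph) (e : G.E),
      f G = w * f (G.deleteEdge e) + y * f (G.contractEdge e) + z * f (G.extractEdge e))
    (m n : ℕ) :
    f (path (m + n + 2)) = w * (f (path (m + 1)) * f (path (n + 1))) +
      y * f (path (m + n + 1)) + z * (f (path m) * f (path n)) := by
  rw [hrec (path (m + n + 2)) (⟨m, by omega⟩ : Fin (m + n + 1)),
    hinv _ _ ⟨pathDeleteEdgeIso m n⟩, hinv _ _ ⟨pathContractEdgeIso m n⟩,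
    hinv _ _ ⟨pathExtractEdgeIso m n⟩, hmul, hmul]

theorem confluence_condition (hinv : Invariant f) (h0 : f emptyGraph = 1)
    (h1 : f singleVertex = x) (hmul : ∀ G₁ G₂ : Multigraph, f (G₁.disjUnion G₂) = f G₁ * f G₂)
    (hrec : ∀ (G : Multigraph) (e : G.E),
      f G = w * f (G.deleteEdge e) + y * f (G.contractEdge e) + z * f (G.extractEdge e)) :
    z * (w - 1) * ((w - 1) * x ^ 2 + x * y + z) = 0 := by
  have p0 : f (path 0) = 1 := (hinv _ _ ⟨pathZeroIso⟩).trans h0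
  have p1 : f (path 1) = x := (hinv _ _ ⟨pathOneIso⟩).trans h1
  have step := path_recurrence hinv hmul hrec
  have p2 : f (path 2) = w * x ^ 2 + y * x + z := by
    simpa [p0, p1, sq] using step 0 0
  have p3 : f (path 3) = w * (x * f (path 2)) + y * f (path 2) + z * x := by
    simpa [p0, p1] using step 0 1
  have p4_end : f (path 4) = w * (x * f (path 3)) + y * f (path 3) + z * f (path 2) := by
    simpa [p0, p1] using step 0 2
  have p4_mid : f (path 4) = w * f (path 2) ^ 2 + y * f (path 3) + z * x ^ 2 := by
    simpa [p1, sq] using step 1 1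
  rw [p3, p2] at p4_end p4_mid
  linear_combination p4_end - p4_mid

end Recurrence

end Multigraph

open MvPolynomial Multigraph in
/-- If `f` is an isomorphism-invariant, multiplicative function from
finite multigraphs to a commutative ring `R` with `f(∅)=1`, `f(E₁)=x`, satisfying
`f(G) = w·f(G₋ₑ) + y·f(G/e) + z·f(G†e)`, then `z(w−1)((w−1)x²+xy+z) = 0` in `R`.
In particular, for `R = ℤ[w,x,y,z]` no such `f` exists. -/
theorem general_recurrence_confluence_condition :
    (∀ (R : Type) [CommRing R], ∀ (w x y z : R) (f : Multigraph → R),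
      Multigraph.Invariant f →
      f Multigraph.emptyGraph = 1 →
      f Multigraph.singleVertex = x →
      (∀ G₁ G₂ : Multigraph, f (G₁.disjUnion G₂) = f G₁ * f G₂) →
      (∀ (G : Multigraph) (e : G.E),
        f G = w * f (G.deleteEdge e) + y * f (G.contractEdge e) + z * f (G.extractEdge e)) →
      z * (w - 1) * ((w - 1) * x ^ 2 + x * y + z) = 0)
    ∧ ¬ ∃ f : Multigraph → MvPolynomial (Fin 4) ℤ,
        Multigraph.Invariant f
        ∧ f Multigraph.emptyGraph = 1
        ∧ f Multigraph.singleVertex = X 1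
        ∧ (∀ G₁ G₂ : Multigraph, f (G₁.disjUnion G₂) = f G₁ * f G₂)
        ∧ (∀ (G : Multigraph) (e : G.E),
            f G = X 0 * f (G.deleteEdge e) + X 2 * f (G.contractEdge e)
              + X 3 * f (G.extractEdge e)) := by
  refine ⟨fun R _ w x y z f => confluence_condition, ?_⟩
  rintro ⟨f, hinv, h0, h1, hmul, hrec⟩
  have h := congrArg (eval fun i : Fin 4 => if i = 3 then (1 : ℤ) else 0)
    (confluence_condition hinv h0 h1 hmul hrec)
  simp at h
end

section
/- Let R be a commutative ring and let w, x, y ∈ R. Define f(G) = Σ_{A ⊆ E} x^{k(A)} · y^{|A|} · w^{|E| − |A|} for every finite multigraph G = (V, E). Then f is isomorphism-invariant, f(∅) = 1, f(E₁) = x, f(G₁ ⊕ G₂) = f(G₁)·f(G₂), and f satisfies the recurrence f(G) = w·f(G_{−e}) + y·f(G_{/e}) + 0·f(G_{†e}) for every edge e of G. Consequently, the edge elimination recurrence with deletion coefficient w, contraction coefficient y, and extraction coefficient z = 0 is confluent, and the resulting invariant is w^{|E|}·Z(G, x, y/w) whenever w is invertible, where Z(G, q, v) = Σ_{A ⊆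 E} q^{k(A)} v^{|A|}. -/
/-- `f(G) = Σ_{A ⊆ E} x^{k(A)} y^{|A|} w^{|E|−|A|}`. -/
noncomputable def Multigraph.sokalGen {R : Type*} [CommRing R] (w x y : R)
    (G : Multigraph) : R :=
  ∑ A : Finset G.E, x ^ G.k A * y ^ A.card * w ^ (Fintype.card G.E - A.card)

/-- The Sokal partition-function form of the Tutte polynomial,
`Z(G,q,v) = Σ_{A ⊆ E} q^{k(A)} v^{|A|}`. -/
noncomputable def Multigraph.sokal {R : Type*} [CommRing R] (G : Multigraph)
    (q v : R) : R :=
  ∑ A : Finset G.E, q ^ G.k A * v ^ A.card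

/-!
Split the subsets `A ⊆ E` according to whether they contain `e`. Those avoiding `e` are the
subsets of `G − e`, with the same components and one more edge outside `A`: the factor `w`.
Those containing `e` are `insert e A'` for the subsets `A'` of `G / e`, and contracting an edge
of `A` does not change the number of components of `(V, A)`: the factor `y`. Components and
edges add up over disjoint unions, so the sum factors. If `w * w' = 1`, then
`w ^ (|E| - |A|) = w ^ |E| * w' ^ |A|`.
-/

open Finset

theorem natCard_quot_eq_of_surjective {α β : Type*} {r : α → α → Prop} {s : β → β → Prop}
    {π : α → β} (hπ : Function.Surjective π)
    (hr : ∀ a b, r a b → Quot.mk s (π a) = Quot.mk s (π b))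
    (hs : ∀ u v, s u v → ∃ a b, π a = u ∧ π b = v ∧ Quot.mk r a = Quot.mk r b)
    (hfiber : ∀ a b, π a = π b → Quot.mk r a = Quot.mk r b) :
    Nat.card (Quot r) = Nat.card (Quot s) := by
  have hsec : ∀ a, Quot.mk r (Function.surjInv hπ (π a)) = Quot.mk r a := fun a =>
    hfiber _ _ (Function.surjInv_eq hπ _)
  refine Nat.card_congr
    { toFun := Quot.lift (fun a => Quot.mk s (π a)) hr
      invFun := Quot.lift (fun u => Quot.mk r (Function.surjInv hπ u)) fun u v huv => ?_
      left_inv := by rintro ⟨a⟩; exact hsec a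
      right_inv := by rintro ⟨u⟩; exact congrArg _ (Function.surjInv_eq hπ u) }
  obtain ⟨a, b, rfl, rfl, hab⟩ := hs u v huv
  simp only [hsec, hab]

def Quot.sumEquiv {α β : Type*} (r : α → α → Prop) (s : β → β → Prop) :
    Quot (Sum.LiftRel r s) ≃ Quot r ⊕ Quot s where
  toFun := Quot.lift (Sum.map (Quot.mk r) (Quot.mk s)) <| by
    rintro _ _ (⟨h⟩ | ⟨h⟩) <;> simp only [Sum.map_inl, Sum.map_inr, Quot.sound h]
  invFun := Sum.elim (Quot.lift (Quot.mk _ ∘ Sum.inl) fun _ _ h => Quot.sound (.inl h))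
    (Quot.lift (Quot.mk _ ∘ Sum.inr) fun _ _ h => Quot.sound (.inr h))
  left_inv := by rintro ⟨a | b⟩ <;> rfl
  right_inv := by rintro (a | a) <;> induction a using Quot.ind <;> rfl

theorem Sym2.exists_of_map_eq_mk {α β : Type*} {f : α → β} {z : Sym2 α} {a b : β}
    (h : z.map f = s(a, b)) : ∃ u v, z = s(u, v) ∧ f u = a ∧ f v = b := by
  induction z using Sym2.ind with | _ u v => ?_
  rcases Sym2.eq_iff.1 h with ⟨rfl, rfl⟩ | ⟨rfl, rfl⟩
  exacts [⟨u, v, rfl, rfl, rfl⟩, ⟨v, u, Sym2.eq_swap, rfl, rfl⟩]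

theorem Fintype.sum_finset_eq_sum_map_add_sum_insert {α M : Type*} [Fintype α] [DecidableEq α]
    [AddCommMonoid M] (a : α) (f : Finset α → M) :
    ∑ s : Finset α, f s = ∑ s : Finset {b // b ≠ a}, f (s.map (.subtype _))
      + ∑ s : Finset {b // b ≠ a}, f (insert a (s.map (.subtype _))) := by
  have hpow :
      (univ.erase a).powerset = univ.map (mapEmbedding (.subtype (· ≠ a))).toEmbedding := by
    ext t
    simp only [mem_powerset, mem_map, mem_univ, true_and, RelEmbedding.coe_toEmbedding,
      mapEmbedding_apply]
    refine ⟨fun ht => ⟨t.subtype (· ≠ a), subtype_map_of_mem fun b hb => ?_⟩, ?_⟩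
    · exact ne_of_mem_erase (ht hb)
    · rintro ⟨s, rfl⟩ b hb
      obtain ⟨c, -, rfl⟩ := mem_map.1 hb
      exact mem_erase.2 ⟨c.2, mem_univ _⟩
  rw [← powerset_univ, ← insert_erase (mem_univ a), sum_powerset_insert (notMem_erase a _),
    hpow, sum_map, sum_map]
  rfl

namespace Multigraph

variable (G : Multigraph)

def AdjIn (S : Finset G.E) (u v : G.V) : Prop := ∃ e ∈ S, G.ends e = s(u, v)

theorem k_of_iso {H : Multigraph} (φ : G.Iso H) (A : Finset G.E) :
    H.k (A.map φ.eEquiv.toEmbedding) = G.k A := by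
  refine (Nat.card_congr (Quot.congr φ.vEquiv fun u v => ?_)).symm
  simp only [mem_map, Equiv.coe_toEmbedding, exists_exists_and_eq_and, φ.ends_map,
    ← Sym2.map_mk, (Sym2.map.injective φ.vEquiv.injective).eq_iff]

theorem k_deleteEdge_s4 (e : G.E) (A : Finset {e' // e' ≠ e}) :
    (G.deleteEdge e).k A = G.k (A.map (.subtype _)) :=
  Nat.card_congr (Quot.congr (Equiv.refl _) fun u v => by
    simp only [mem_map, exists_exists_and_eq_and]; rfl)

def contractVertex (e : G.E) (v : G.V) : (G.contractEdge e).V :=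
  if h : v ∈ G.ends e then Sum.inr () else Sum.inl ⟨v, h⟩

theorem contractVertex_eq_iff (e : G.E) {u v : G.V} :
    G.contractVertex e u = G.contractVertex e v ↔ u = v ∨ u ∈ G.ends e ∧ v ∈ G.ends e := by
  unfold contractVertex
  split_ifs <;> grind

theorem contractVertex_surjective (e : G.E) : Function.Surjective (G.contractVertex e) := by
  rintro (⟨v, hv⟩ | ⟨⟩)
  · exact ⟨v, dif_neg hv⟩
  · exact ⟨_, dif_pos (Sym2.out_fst_mem (G.ends e))⟩

theorem k_contractEdge_s4 (e : G.E) (A : Finset {e' // e' ≠ e}) :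
    (G.contractEdge e).k A = G.k (insert e (A.map (.subtype _))) := by
  set S := insert e (A.map (.subtype _))
  have hends : ∀ u ∈ G.ends e, ∀ v ∈ G.ends e, Quot.mk (G.AdjIn S) u = Quot.mk _ v := by
    intro u hu v hv
    by_cases huv : u = v
    · rw [huv]
    · exact Quot.sound ⟨e, mem_insert_self _ _, (Sym2.mem_and_mem_iff huv).1 ⟨hu, hv⟩⟩
  refine (natCard_quot_eq_of_surjective (G.contractVertex_surjective e) ?_ ?_ ?_).symm
  · rintro a b ⟨e', he', hab⟩
    rcases mem_insert.1 he' with rfl | he'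
    · have hab' : a ∈ G.ends e' ∧ b ∈ G.ends e' := by simp [hab]
      rw [(G.contractVertex_eq_iff e').2 (.inr hab')]
    · obtain ⟨e'', he'', rfl⟩ := mem_map.1 he'
      exact Quot.sound ⟨e'', he'', congrArg (Sym2.map _) hab⟩
  · rintro u v ⟨e', he', huv⟩
    obtain ⟨a, b, hab, rfl, rfl⟩ := Sym2.exists_of_map_eq_mk huv
    exact ⟨a, b, rfl, rfl, Quot.sound ⟨e'.1, mem_insert_of_mem (mem_map_of_mem _ he'), hab⟩⟩
  · intro a b hab
    rcases (G.contractVertex_eq_iff e).1 hab with rfl | ⟨ha, hb⟩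
    exacts [rfl, hends a ha b hb]

theorem k_empty : G.k ∅ = Nat.card G.V :=
  Nat.card_congr
    { toFun := Quot.lift id fun _ _ ⟨_, he, _⟩ => absurd he (notMem_empty _)
      invFun := Quot.mk _
      left_inv := by rintro ⟨u⟩; rfl
      right_inv _ := rfl }

theorem k_disjUnion (G₁ G₂ : Multigraph) (A : Finset (G₁.E ⊕ G₂.E)) :
    (G₁.disjUnion G₂).k A = G₁.k A.toLeft + G₂.k A.toRight := by
  have hadj : ∀ u v, (G₁.disjUnion G₂).AdjIn A u v ↔
      Sum.LiftRel (G₁.AdjIn A.toLeft) (G₂.AdjIn A.toRight) u v := by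
    intro u v
    constructor
    · rintro ⟨e' | e', he', huv⟩
      · obtain ⟨a, b, hab, rfl, rfl⟩ := Sym2.exists_of_map_eq_mk huv
        exact .inl ⟨e', mem_toLeft.2 he', hab⟩
      · obtain ⟨a, b, hab, rfl, rfl⟩ := Sym2.exists_of_map_eq_mk huv
        exact .inr ⟨e', mem_toRight.2 he', hab⟩
    · rintro (⟨⟨e', he', hab⟩⟩ | ⟨⟨e', he', hab⟩⟩)
      · exact ⟨.inl e', mem_toLeft.1 he', congrArg (Sym2.map _) hab⟩
      · exact ⟨.inr e', mem_toRight.1 he', congrArg (Sym2.map _) hab⟩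
  exact (Nat.card_congr ((Quot.congr (Equiv.refl _) hadj).trans (Quot.sumEquiv _ _))).trans
    Nat.card_sum

variable {R : Type*} [CommRing R] (w x y : R)

theorem sokalGen_invariant : Invariant (sokalGen w x y) := by
  rintro G H ⟨φ⟩
  refine Fintype.sum_equiv φ.eEquiv.finsetCongr _ _ fun A => ?_
  rw [Equiv.finsetCongr_apply, G.k_of_iso φ, card_map, Fintype.card_congr φ.eEquiv]

theorem sokalGen_of_isEmpty [IsEmpty G.E] :
    G.sokalGen w x y = x ^ Nat.card G.V := by
  rw [sokalGen, Fintype.sum_subsingleton _ ∅, k_empty]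
  simp

theorem sokalGen_emptyGraph : emptyGraph.sokalGen w x y = 1 := by
  have : IsEmpty emptyGraph.E := inferInstanceAs (IsEmpty Empty)
  have : IsEmpty emptyGraph.V := inferInstanceAs (IsEmpty Empty)
  rw [sokalGen_of_isEmpty, Nat.card_of_isEmpty, pow_zero]

theorem sokalGen_singleVertex : singleVertex.sokalGen w x y = x := by
  have : IsEmpty singleVertex.E := inferInstanceAs (IsEmpty Empty)
  have : Unique singleVertex.V := inferInstanceAs (Unique Unit)
  rw [sokalGen_of_isEmpty, Nat.card_unique, pow_one]

theorem sokalGen_disjUnion (G₁ G₂ : Multigraph) :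
    (G₁.disjUnion G₂).sokalGen w x y = G₁.sokalGen w x y * G₂.sokalGen w x y := by
  rw [sokalGen, sokalGen, sokalGen, sum_mul_sum, ← Fintype.sum_prod_type']
  refine Fintype.sum_equiv sumEquiv.toEquiv _ _ fun A => ?_
  change x ^ (G₁.disjUnion G₂).k A * y ^ #A * w ^ (Fintype.card (G₁.E ⊕ G₂.E) - #A) =
    x ^ G₁.k A.toLeft * y ^ #A.toLeft * w ^ (Fintype.card G₁.E - #A.toLeft) *
      (x ^ G₂.k A.toRight * y ^ #A.toRight * w ^ (Fintype.card G₂.E - #A.toRight))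
  rw [k_disjUnion, Fintype.card_sum, ← card_toLeft_add_card_toRight,
    ← tsub_add_tsub_comm (card_le_univ _) (card_le_univ _)]
  ring

theorem sokalGen_eq_deleteEdge_add_contractEdge (e : G.E) :
    G.sokalGen w x y
      = w * (G.deleteEdge e).sokalGen w x y + y * (G.contractEdge e).sokalGen w x y := by
  set n := Fintype.card {e' // e' ≠ e}
  have hn : Fintype.card G.E = n + 1 :=
    (Fintype.card_congr (Equiv.optionSubtypeNe e)).symm.trans Fintype.card_option
  change _ = w * ∑ A : Finset {e' // e' ≠ e}, x ^ (G.deleteEdge e).k A * y ^ #A * w ^ (n - #A)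
    + y * ∑ A : Finset {e' // e' ≠ e}, x ^ (G.contractEdge e).k A * y ^ #A * w ^ (n - #A)
  rw [sokalGen, Fintype.sum_finset_eq_sum_map_add_sum_insert e, mul_sum, mul_sum]
  congr 1 <;> refine sum_congr rfl fun A _ => ?_
  · rw [k_deleteEdge_s4, card_map, hn, Nat.sub_add_comm (card_le_univ A), pow_succ]
    ring
  · rw [k_contractEdge_s4, card_insert_of_notMem (by simp), card_map, hn, Nat.add_sub_add_right,
      pow_succ]
    ring

theorem sokalGen_eq_pow_mul_sokal {w' : R} (hw : w * w' = 1) :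
    G.sokalGen w x y = w ^ Fintype.card G.E * G.sokal x (y * w') := by
  rw [sokalGen, sokal, mul_sum]
  refine sum_congr rfl fun A _ => ?_
  calc x ^ G.k A * y ^ #A * w ^ (Fintype.card G.E - #A)
      = x ^ G.k A * y ^ #A * w ^ (Fintype.card G.E - #A) * (w * w') ^ #A := by
        rw [hw, one_pow, mul_one]
    _ = (w ^ (Fintype.card G.E - #A) * w ^ #A) * (x ^ G.k A * (y * w') ^ #A) := by ring
    _ = w ^ Fintype.card G.E * (x ^ G.k A * (y * w') ^ #A) := by
        rw [← pow_add, Nat.sub_add_cancel (card_le_univ A)]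

end Multigraph

open Multigraph in
/-- The function `f(G) = Σ_{A⊆E} x^{k(A)} y^{|A|} w^{|E|−|A|}` is an
isomorphism-invariant, multiplicative function with `f(∅)=1`, `f(E₁)=x`, satisfying the
edge elimination recurrence with coefficients `(w, y, 0)`; hence that recurrence is
confluent, and the resulting invariant is `w^{|E|}·Z(G, x, y/w)` whenever `w` is
invertible. -/
theorem sokalGen_properties (R : Type) [CommRing R] (w x y : R) :
    Multigraph.Invariant (Multigraph.sokalGen w x y)
    ∧ Multigraph.emptyGraph.sokalGen w x y = 1
    ∧ Multigraph.singleVertex.sokalGen w x y = x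
    ∧ (∀ G₁ G₂ : Multigraph,
        (G₁.disjUnion G₂).sokalGen w x y = G₁.sokalGen w x y * G₂.sokalGen w x y)
    ∧ (∀ (G : Multigraph) (e : G.E),
        G.sokalGen w x y = w * (G.deleteEdge e).sokalGen w x y
          + y * (G.contractEdge e).sokalGen w x y
          + 0 * (G.extractEdge e).sokalGen w x y)
    ∧ (∃ f : Multigraph → R,
        Multigraph.Invariant f
        ∧ f Multigraph.emptyGraph = 1
        ∧ f Multigraph.singleVertex = x
        ∧ (∀ G₁ G₂ : Multigraph, f (G₁.disjUnion G₂) = f G₁ * f G₂)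
        ∧ (∀ (G : Multigraph) (e : G.E),
            f G = w * f (G.deleteEdge e) + y * f (G.contractEdge e)
              + 0 * f (G.extractEdge e)))
    ∧ (∀ w' : R, w * w' = 1 → ∀ G : Multigraph,
        G.sokalGen w x y = w ^ (Fintype.card G.E) * G.sokal x (y * w')) := by
  have hrec (G : Multigraph) (e : G.E) :
      G.sokalGen w x y = w * (G.deleteEdge e).sokalGen w x y
        + y * (G.contractEdge e).sokalGen w x y + 0 * (G.extractEdge e).sokalGen w x y := by
    rw [zero_mul, add_zero, sokalGen_eq_deleteEdge_add_contractEdge]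
  exact ⟨sokalGen_invariant w x y, sokalGen_emptyGraph w x y, sokalGen_singleVertex w x y,
    sokalGen_disjUnion w x y, hrec, ⟨sokalGen w x y, sokalGen_invariant w x y,
      sokalGen_emptyGraph w x y, sokalGen_singleVertex w x y, sokalGen_disjUnion w x y, hrec⟩,
    fun _ hw G => G.sokalGen_eq_pow_mul_sokal w x y hw⟩
end

section
/- Let G = (V, E) be a finite multigraph and λ a nonnegative integer. Then the number of proper colorings of G with λ colors, i.e. maps φ : V → {1, …, λ} such that φ(u) ≠ φ(v) for every edge with endpoints u and v (so this number is 0 if G has a loop), equals the evaluation ξ(G, λ, −1, 0) of the edge elimination polynomial. -/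
section Aux
open Finset

/-- Functions out of a quotient correspond to relation-respecting functions. -/
def quotLiftEquiv {α β : Type*} (r : α → α → Prop) :
    (Quot r → β) ≃ {f : α → β // ∀ a b, r a b → f a = f b} where
  toFun f := ⟨f ∘ Quot.mk r, fun a b h => congrArg f (Quot.sound h)⟩
  invFun f := Quot.lift f.1 f.2
  left_inv f := funext fun q => by induction q using Quot.ind; rfl
  right_inv f := rfl

lemma Multigraph.kcov_empty (G : Multigraph) : G.kcov (∅ : Finset G.E) = 0 := by
  have h1 : IsEmpty {w : G.V // ∃ e ∈ (∅ : Finset G.E), w ∈ G.ends e} :=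
    ⟨fun w => by simpa using w.2⟩
  have h2 : IsEmpty (Quot (fun u v : {w : G.V // ∃ e ∈ (∅ : Finset G.E), w ∈ G.ends e} =>
      ∃ e ∈ (∅ : Finset G.E), G.ends e = s(u.val, v.val))) :=
    ⟨fun q => by induction q using Quot.ind with | _ a => exact isEmptyElim a⟩
  exact Nat.card_of_isEmpty

lemma Multigraph.kcov_pos (G : Multigraph) {B : Finset G.E} (hB : B.Nonempty) :
    0 < G.kcov B := by
  obtain ⟨e, he⟩ := hB
  have hv : (G.ends e).out.1 ∈ G.ends e := Sym2.out_fst_mem _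
  have : Nonempty (Quot (fun u v : {w : G.V // ∃ e ∈ B, w ∈ G.ends e} =>
      ∃ e ∈ B, G.ends e = s(u.val, v.val))) :=
    ⟨Quot.mk _ ⟨(G.ends e).out.1, e, he, hv⟩⟩
  exact Nat.card_pos

lemma edge_ne_iff (G : Multigraph) {l : ℕ} (e : G.E) (f : G.V → Fin l) :
    (¬ ∀ u v, G.ends e = s(u, v) → f u = f v) ↔
      (∀ u v, G.ends e = s(u, v) → f u ≠ f v) := by
  obtain ⟨a, b, hab⟩ : ∃ a b, G.ends e = s(a, b) :=
    Sym2.ind (fun a b => ⟨a, b, rfl⟩) (G.ends e)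
  rw [hab]
  constructor
  · intro h u v huv
    have hne : f a ≠ f b := by
      intro hEq
      apply h
      intro u v huv
      rcases Sym2.eq_iff.mp huv with ⟨rfl, rfl⟩ | ⟨rfl, rfl⟩
      · exact hEq
      · exact hEq.symm
    rcases Sym2.eq_iff.mp huv with ⟨rfl, rfl⟩ | ⟨rfl, rfl⟩
    · exact hne
    · exact hne.symm
  · intro h hall
    exact h a b rfl (hall a b rfl)

end Aux


open Multigraph in
/-- The number of proper colorings of `G` with `λ` colors equals
the evaluation `ξ(G, λ, −1, 0)` of the edge elimination polynomial. -/
theorem chromatic_eq_xi (G : Multigraph) (l : ℕ) :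
    (Nat.card {φ : G.V → Fin l // ∀ (e : G.E) (u v : G.V),
        G.ends e = s(u, v) → φ u ≠ φ v} : ℤ) =
      G.xi (l : ℤ) (-1) 0 := by
  have hxi : G.xi (l : ℤ) (-1) 0 =
      ∑ A : Finset G.E, (l : ℤ) ^ G.k A * (-1) ^ A.card := by
    unfold Multigraph.xi
    refine Finset.sum_congr rfl fun A _ => ?_
    have hterm : ∀ B : Finset G.E,
        (if G.CovDisjoint A B then
          (l : ℤ) ^ (G.k (A ∪ B) - G.kcov B) * (-1) ^ (A.card + B.card - G.kcov B)
            * (0 : ℤ) ^ G.kcov B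
        else 0) =
        (if B = ∅ then (l : ℤ) ^ G.k A * (-1) ^ A.card else 0) := by
      intro B
      by_cases hB : B = ∅
      · subst hB
        have hd : G.CovDisjoint A ∅ := by
          intro v _ hv
          obtain ⟨e, he, -⟩ := hv
          simp at he
        rw [if_pos hd, if_pos rfl, G.kcov_empty]
        simp
      · rw [if_neg hB]
        split_ifs with h
        · have : (0 : ℤ) ^ G.kcov B = 0 :=
            zero_pow (G.kcov_pos (Finset.nonempty_iff_ne_empty.mpr hB)).ne'
          rw [this, mul_zero]
        · rfl
    rw [Finset.sum_congr rfl fun B _ => hterm B, Finset.sum_ite_eq' Finset.univ (∅ : Finset G.E)]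
    simp
  rw [hxi]
  -- Step 2: l ^ k A counts colorings constant on components of (V, A)
  have hcount : ∀ A : Finset G.E,
      (l : ℤ) ^ G.k A =
        ((Finset.univ.filter fun f : G.V → Fin l =>
          ∀ u v, (∃ e ∈ A, G.ends e = s(u, v)) → f u = f v).card : ℤ) := by
    intro A
    have h1 : Nat.card (Quot (fun u v : G.V => ∃ e ∈ A, G.ends e = s(u, v)) → Fin l)
        = l ^ G.k A := by
      rw [Nat.card_fun, Nat.card_eq_fintype_card (α := Fin l), Fintype.card_fin]
      rfl
    have h2 := Nat.card_congr (quotLiftEquiv (β := Fin l)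
      (fun u v : G.V => ∃ e ∈ A, G.ends e = s(u, v)))
    rw [h1] at h2
    have h3 : l ^ G.k A = (Finset.univ.filter fun f : G.V → Fin l =>
        ∀ u v, (∃ e ∈ A, G.ends e = s(u, v)) → f u = f v).card := by
      rw [h2, Nat.card_eq_fintype_card, Fintype.card_subtype]
    exact_mod_cast h3
  calc (Nat.card {φ : G.V → Fin l // ∀ (e : G.E) (u v : G.V),
        G.ends e = s(u, v) → φ u ≠ φ v} : ℤ)
      = ∑ f : G.V → Fin l,
          (if ∀ (e : G.E) (u v : G.V), G.ends e = s(u, v) → f u ≠ f v then (1 : ℤ) else 0) := by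
        rw [Nat.card_eq_fintype_card, Fintype.card_subtype, Finset.sum_boole]
    _ = ∑ f : G.V → Fin l, ∑ A : Finset G.E,
          (if A ⊆ Finset.univ.filter (fun e : G.E => ∀ u v, G.ends e = s(u, v) → f u = f v)
            then ((-1 : ℤ)) ^ A.card else 0) := by
        refine Finset.sum_congr rfl fun f _ => ?_
        have : (∑ A : Finset G.E,
            if A ⊆ Finset.univ.filter (fun e : G.E => ∀ u v, G.ends e = s(u, v) → f u = f v)
              then ((-1 : ℤ)) ^ A.card else 0) =
            ∑ A ∈ (Finset.univ.filter (fun e : G.E =>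
              ∀ u v, G.ends e = s(u, v) → f u = f v)).powerset, ((-1 : ℤ)) ^ A.card := by
          rw [← Finset.sum_filter]
          refine Finset.sum_congr ?_ fun _ _ => rfl
          ext A
          simp [Finset.mem_powerset]
        rw [this, Finset.sum_powerset_neg_one_pow_card]
        congr 1
        rw [eq_iff_iff, Finset.filter_eq_empty_iff]
        constructor
        · intro h e _
          exact (edge_ne_iff G e f).mpr (h e)
        · intro h e
          exact (edge_ne_iff G e f).mp (h (Finset.mem_univ e))
    _ = ∑ A : Finset G.E, ∑ f : G.V → Fin l,
          (if A ⊆ Finset.univ.filter (fun e : G.E => ∀ u v, G.ends e = s(u, v) → f u = f v)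
            then ((-1 : ℤ)) ^ A.card else 0) := Finset.sum_comm
    _ = ∑ A : Finset G.E, (l : ℤ) ^ G.k A * (-1) ^ A.card := by
        refine Finset.sum_congr rfl fun A _ => ?_
        have hsub : ∀ f : G.V → Fin l,
            (A ⊆ Finset.univ.filter (fun e : G.E => ∀ u v, G.ends e = s(u, v) → f u = f v)) ↔
            (∀ u v, (∃ e ∈ A, G.ends e = s(u, v)) → f u = f v) := by
          intro f
          constructor
          · rintro hA u v ⟨e, he, hends⟩
            exact (Finset.mem_filter.mp (hA he)).2 u v hends
          · intro hP e he
            exact Finset.mem_filter.mpr ⟨Finset.mem_univ e, fun u v hends =>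
              hP u v ⟨e, he, hends⟩⟩
        calc (∑ f : G.V → Fin l,
              if A ⊆ Finset.univ.filter (fun e : G.E => ∀ u v, G.ends e = s(u, v) → f u = f v)
                then ((-1 : ℤ)) ^ A.card else 0)
            = ∑ f : G.V → Fin l,
              (if ∀ u v, (∃ e ∈ A, G.ends e = s(u, v)) → f u = f v
                then ((-1 : ℤ)) ^ A.card else 0) := by
              refine Finset.sum_congr rfl fun f _ => ?_
              simp only [hsub f]
          _ = ((Finset.univ.filter fun f : G.V → Fin l =>
                ∀ u v, (∃ e ∈ A, G.ends e = s(u, v)) → f u = f v).card : ℤ)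
                * ((-1 : ℤ)) ^ A.card := by
              rw [← Finset.sum_filter, Finset.sum_const, nsmul_eq_mul]
          _ = (l : ℤ) ^ G.k A * (-1) ^ A.card := by rw [← hcount A]
end

section
/- For every finite multigraph G = (V, E), the classical Tutte polynomial is obtained from the edge elimination polynomial by substitution: in the field ℚ(x, y) of rational functions, T(G, x, y) = (x−1)^{−k(E)} · (y−1)^{−|V|} · ξ(G, (x−1)(y−1), y−1, 0); equivalently, (x−1)^{k(E)} (y−1)^{|V|} T(G, x, y) = ξ(G, (x−1)(y−1), y−1, 0) = Σ_{A ⊆ E} (x−1)^{k(A)} (y−1)^{|A| + k(A)}. -/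
open MvPolynomial

/-- The field `ℚ(x,y)` of rational functions in two variables. -/
noncomputable abbrev RatFuncXY : Type := FractionRing (MvPolynomial (Fin 2) ℚ)

/-- The rational function `x`. -/
noncomputable def ratX : RatFuncXY := algebraMap (MvPolynomial (Fin 2) ℚ) RatFuncXY (X 0)

/-- The rational function `y`. -/
noncomputable def ratY : RatFuncXY := algebraMap (MvPolynomial (Fin 2) ℚ) RatFuncXY (X 1)

/-- The classical Tutte polynomial
`T(G,x,y) = Σ_{A⊆E} (x−1)^{k(A)−k(E)} (y−1)^{|A|+k(A)−|V|}`, as an element of `ℚ(x,y)`. -/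
noncomputable def Multigraph.tutte (G : Multigraph) : RatFuncXY :=
  ∑ A : Finset G.E,
    (ratX - 1) ^ ((G.k A : ℤ) - (G.k Finset.univ : ℤ))
      * (ratY - 1) ^ ((A.card : ℤ) + (G.k A : ℤ) - (Fintype.card G.V : ℤ))

/-!
Setting `z = 0` in `ξ` kills every pair `(A, B)` with `B ≠ ∅`, because then `k_cov(B) ≥ 1`; what is
left is `Σ_A x^{k(A)} y^{|A|}`. At `x = (X−1)(Y−1)`, `y = Y−1` this is the Tutte sum cleared of the
denominators `(X−1)^{k(E)} (Y−1)^{|V|}`, which are invertible in `ℚ(X, Y)`.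
-/

theorem algebraMap_X_sub_one_ne_zero (i : Fin 2) :
    algebraMap (MvPolynomial (Fin 2) ℚ) RatFuncXY (X i) - 1 ≠ 0 := by
  rw [← map_one (algebraMap (MvPolynomial (Fin 2) ℚ) RatFuncXY), ← map_sub, ne_eq,
    IsFractionRing.to_map_eq_zero_iff]
  intro h
  have := congrArg (MvPolynomial.eval fun _ => (2 : ℚ)) h
  norm_num at this

theorem ratX_sub_one_ne_zero : ratX - 1 ≠ 0 := algebraMap_X_sub_one_ne_zero 0

theorem ratY_sub_one_ne_zero : ratY - 1 ≠ 0 := algebraMap_X_sub_one_ne_zero 1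

namespace Multigraph

variable (G : Multigraph)

theorem kcov_empty_s9 : G.kcov ∅ = 0 := by
  have : IsEmpty {w : G.V // ∃ e ∈ (∅ : Finset G.E), w ∈ G.ends e} :=
    ⟨fun ⟨_, _, he, _⟩ => by simp at he⟩
  exact Nat.card_of_isEmpty

theorem kcov_pos_s9 {B : Finset G.E} (hB : B.Nonempty) : 0 < G.kcov B := by
  obtain ⟨e, he⟩ := hB
  exact Nat.card_pos_iff.2 ⟨⟨Quot.mk _ ⟨(G.ends e).out.1, e, he, Sym2.out_fst_mem _⟩⟩,
    inferInstance⟩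

theorem covDisjoint_empty_right (A : Finset G.E) : G.CovDisjoint A ∅ := by
  rintro v - ⟨e, he, -⟩
  simp at he

theorem xi_eval_zero {R : Type*} [CommRing R] (x y : R) :
    G.xi x y 0 = ∑ A : Finset G.E, x ^ G.k A * y ^ A.card := by
  refine Finset.sum_congr rfl fun A _ => ?_
  rw [Finset.sum_eq_single_of_mem ∅ (Finset.mem_univ _)]
  · simp [G.covDisjoint_empty_right, G.kcov_empty_s9]
  · intro B _ hB
    simp [zero_pow (G.kcov_pos_s9 (Finset.nonempty_iff_ne_empty.2 hB)).ne']

theorem sub_one_pow_mul_tutte :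
    (ratX - 1) ^ G.k Finset.univ * (ratY - 1) ^ Fintype.card G.V * G.tutte =
      ∑ A : Finset G.E, (ratX - 1) ^ G.k A * (ratY - 1) ^ (A.card + G.k A) := by
  rw [tutte, Finset.mul_sum]
  refine Finset.sum_congr rfl fun A _ => ?_
  rw [zpow_sub₀ ratX_sub_one_ne_zero, zpow_sub₀ ratY_sub_one_ne_zero, ← Nat.cast_add, zpow_natCast, zpow_natCast, zpow_natCast,
    zpow_natCast]
  field_simp [ratX_sub_one_ne_zero, ratY_sub_one_ne_zero]

end Multigraph

open Multigraph in
/-- In `ℚ(x,y)`: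
`T(G,x,y) = (x−1)^{−k(E)} (y−1)^{−|V|} · ξ(G,(x−1)(y−1), y−1, 0)`; equivalently
`(x−1)^{k(E)} (y−1)^{|V|} T(G,x,y) = ξ(G,(x−1)(y−1), y−1, 0)
  = Σ_{A⊆E} (x−1)^{k(A)} (y−1)^{|A|+k(A)}`. -/
theorem tutte_eq_xi (G : Multigraph) :
    G.tutte = (ratX - 1) ^ (-(G.k Finset.univ : ℤ)) * (ratY - 1) ^ (-(Fintype.card G.V : ℤ))
        * G.xi ((ratX - 1) * (ratY - 1)) (ratY - 1) 0
    ∧ (ratX - 1) ^ (G.k Finset.univ) * (ratY - 1) ^ (Fintype.card G.V) * G.tutte =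
        G.xi ((ratX - 1) * (ratY - 1)) (ratY - 1) 0
    ∧ G.xi ((ratX - 1) * (ratY - 1)) (ratY - 1) 0 =
        ∑ A : Finset G.E, (ratX - 1) ^ (G.k A) * (ratY - 1) ^ (A.card + G.k A) := by
  have hxi : G.xi ((ratX - 1) * (ratY - 1)) (ratY - 1) 0 =
      ∑ A : Finset G.E, (ratX - 1) ^ (G.k A) * (ratY - 1) ^ (A.card + G.k A) := by
    simp only [xi_eval_zero, mul_pow, pow_add]
    exact Finset.sum_congr rfl fun _ _ => by ring
  have hcleared := G.sub_one_pow_mul_tutte.trans hxi.symm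
  refine ⟨?_, hcleared, hxi⟩
  rw [← hcleared, zpow_neg, zpow_neg, zpow_natCast, zpow_natCast]
  field_simp [ratX_sub_one_ne_zero, ratY_sub_one_ne_zero]
end
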